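/- Let Φ be a positive trace-preserving map on M_d and τ a density matrix. Define the replacement channel R(X) := tr(X)·Φ(τ). Then κ_tr(Φ) ≤ ‖Φ − R‖_{1→1} ≤ 4·κ_tr(Φ), where ‖·‖_{1→1} is the operator norm induced by the trace norm. -/

import Mathlib

open Matrix
open scoped ComplexOrder

namespace TD

variable {d : ℕ}

noncomputable def trNorm (A : Matrix (Fin d) (Fin d) ℂ) : ℝ :=
  (((Matrix.posSemidef_conjTranspose_mul_self A).1.eigenvectorUnitary.1 *
      diagonal ((fun x : ℝ => (x : ℂ)) ∘ (Real.sqrt ∘ (Matrix.posSemidef_conjTranspose_mul_self A).1.eigenvalues)) *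
      (star (Matrix.posSemidef_conjTranspose_mul_self A).1.eigenvectorUnitary :
        Matrix (Fin d) (Fin d) ℂ)).trace).re

noncomputable def hsNorm (A : Matrix (Fin d) (Fin d) ℂ) : ℝ :=
  Real.sqrt ((Aᴴ * A).trace.re)

def Density (ρ : Matrix (Fin d) (Fin d) ℂ) : Prop :=
  ρ.PosSemidef ∧ ρ.trace = 1

def PosMap (T : Matrix (Fin d) (Fin d) ℂ →ₗ[ℂ] Matrix (Fin d) (Fin d) ℂ) : Prop :=
  ∀ A, A.PosSemidef → (T A).PosSemidef

def TrPres (T : Matrix (Fin d) (Fin d) ℂ →ₗ[ℂ] Matrix (Fin d) (Fin d) ℂ) : Prop :=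
  ∀ A, (T A).trace = A.trace

noncomputable def kappaTr (T : Matrix (Fin d) (Fin d) ℂ →ₗ[ℂ] Matrix (Fin d) (Fin d) ℂ) : ℝ :=
  ⨆ X : {X : Matrix (Fin d) (Fin d) ℂ // X.IsHermitian ∧ X.trace = 0 ∧ X ≠ 0},
    trNorm (T X.1) / trNorm X.1

noncomputable def opNorm1 (L : Matrix (Fin d) (Fin d) ℂ →ₗ[ℂ] Matrix (Fin d) (Fin d) ℂ) : ℝ :=
  ⨆ X : {X : Matrix (Fin d) (Fin d) ℂ // X ≠ 0}, trNorm (L X.1) / trNorm X.1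

noncomputable def s0 (T : Matrix (Fin d) (Fin d) ℂ →ₗ[ℂ] Matrix (Fin d) (Fin d) ℂ) : ℝ :=
  ⨆ X : {X : Matrix (Fin d) (Fin d) ℂ // X.trace = 0 ∧ X ≠ 0},
    hsNorm (T X.1) / hsNorm X.1

noncomputable def choi (T : Matrix (Fin d) (Fin d) ℂ →ₗ[ℂ] Matrix (Fin d) (Fin d) ℂ) :
    Matrix (Fin d × Fin d) (Fin d × Fin d) ℂ :=
  Matrix.of fun p q => T (Matrix.single p.1 q.1 1) p.2 q.2

def CP (T : Matrix (Fin d) (Fin d) ℂ →ₗ[ℂ] Matrix (Fin d) (Fin d) ℂ) : Prop :=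
  (choi T).PosSemidef

noncomputable def replaceChan (τ : Matrix (Fin d) (Fin d) ℂ) :
    Matrix (Fin d) (Fin d) ℂ →ₗ[ℂ] Matrix (Fin d) (Fin d) ℂ where
  toFun X := X.trace • τ
  map_add' X Y := by simp [Matrix.trace_add, add_smul]
  map_smul' c X := by simp [Matrix.trace_smul, smul_smul]

noncomputable def prodComp {n : ℕ} (T : Fin n → (Matrix (Fin d) (Fin d) ℂ →ₗ[ℂ] Matrix (Fin d) (Fin d) ℂ)) :
    Matrix (Fin d) (Fin d) ℂ →ₗ[ℂ] Matrix (Fin d) (Fin d) ℂ :=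
  (List.ofFn T).foldl (fun acc f => f ∘ₗ acc) LinearMap.id

noncomputable def lpow (T : Matrix (Fin d) (Fin d) ℂ →ₗ[ℂ] Matrix (Fin d) (Fin d) ℂ) :
    ℕ → (Matrix (Fin d) (Fin d) ℂ →ₗ[ℂ] Matrix (Fin d) (Fin d) ℂ)
  | 0 => LinearMap.id
  | n + 1 => T ∘ₗ lpow T n

noncomputable def conjPair (K0 K1 : Matrix (Fin 2) (Fin 2) ℂ) :
    Matrix (Fin 2) (Fin 2) ℂ →ₗ[ℂ] Matrix (Fin 2) (Fin 2) ℂ where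
  toFun X := K0 * X * K0ᴴ + K1 * X * K1ᴴ
  map_add' X Y := by
    simp only [Matrix.mul_add, Matrix.add_mul]
    abel
  map_smul' c X := by
    simp [Matrix.mul_smul, Matrix.smul_mul, smul_add]

end TD

/-!
For traceless `X` the replacement channel vanishes, so `(Φ - R) X = Φ X`: this is the lower
bound. For the upper bound, `(Φ - R) X = Φ (X - tr(X) τ)` with `X - tr(X) τ` traceless. Splitting
`X = A + i B` into Hermitian real and imaginary parts, each of trace norm at most `‖X‖₁`, the
Hermitian matrix `A - tr(A) τ` has trace norm at most `2 ‖A‖₁` because `|tr A| ≤ ‖A‖₁` and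
`‖τ‖₁ = 1`; hence the factor `4`.

The trace norm `‖A‖₁ = tr |A|` is subadditive because it is the maximum of `∑ Re ⟪uᵢ, A vᵢ⟫` over
pairs of orthonormal families, attained on the singular vectors of `A`. The Jordan decomposition
`A = A⁺ - A⁻` shows that a positive trace-preserving map is a trace-norm contraction on Hermitian
matrices, so the suprema involved are bounded (an unbounded `⨆` of reals would be `0`).
-/

open scoped MatrixOrder InnerProductSpace ComplexStarModule

lemma Orthonormal.sum_norm_inner_mul_norm_inner_le {𝕜 E ι : Type*} [RCLike 𝕜]
    [NormedAddCommGroup E] [InnerProductSpace 𝕜 E] [Fintype ι] {u v : ι → E}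
    (hu : Orthonormal 𝕜 u) (hv : Orthonormal 𝕜 v) (x y : E) :
    ∑ i, ‖inner 𝕜 (v i) x‖ * ‖inner 𝕜 (u i) y‖ ≤ ‖x‖ * ‖y‖ := by
  refine le_of_sq_le_sq ?_ (by positivity)
  calc (∑ i, ‖inner 𝕜 (v i) x‖ * ‖inner 𝕜 (u i) y‖) ^ 2
      ≤ (∑ i, ‖inner 𝕜 (v i) x‖ ^ 2) * ∑ i, ‖inner 𝕜 (u i) y‖ ^ 2 :=
        Finset.sum_mul_sq_le_sq_mul_sq _ _ _
    _ ≤ ‖x‖ ^ 2 * ‖y‖ ^ 2 :=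
        mul_le_mul (Orthonormal.sum_inner_products_le x hv) (Orthonormal.sum_inner_products_le y hu)
          (by positivity) (by positivity)
    _ = (‖x‖ * ‖y‖) ^ 2 := by ring

namespace TD

variable {d : ℕ}

lemma trNorm_eq_re_trace_abs (A : Matrix (Fin d) (Fin d) ℂ) :
    trNorm A = (CFC.abs A).trace.re := by
  rw [trNorm, CFC.abs, CFC.sqrt_eq_cfc, show star A * A = Aᴴ * A from rfl,
    cfc_nnreal_eq_real _ _ (posSemidef_conjTranspose_mul_self A).nonneg,
    (posSemidef_conjTranspose_mul_self A).1.cfc_eq, IsHermitian.cfc,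
    Unitary.conjStarAlgAut_apply]
  congr
  funext x
  rw [Real.sqrt]

lemma posSemidef_abs (A : Matrix (Fin d) (Fin d) ℂ) : (CFC.abs A).PosSemidef :=
  (CFC.abs_nonneg A).posSemidef

lemma trNorm_of_posSemidef {A : Matrix (Fin d) (Fin d) ℂ} (hA : A.PosSemidef) :
    trNorm A = A.trace.re := by
  rw [trNorm_eq_re_trace_abs, CFC.abs_of_nonneg A hA.nonneg]

lemma trNorm_nonneg (A : Matrix (Fin d) (Fin d) ℂ) : 0 ≤ trNorm A := by
  rw [trNorm_eq_re_trace_abs]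
  exact Complex.nonneg_iff.mp (posSemidef_abs A).trace_nonneg |>.1

lemma trNorm_pos {A : Matrix (Fin d) (Fin d) ℂ} (hA : A ≠ 0) : 0 < trNorm A := by
  refine (trNorm_nonneg A).lt_of_ne' fun h => hA ?_
  rwa [trNorm_eq_re_trace_abs, Complex.re_eq_norm.mpr (posSemidef_abs A).trace_nonneg,
    norm_eq_zero, (posSemidef_abs A).trace_eq_zero_iff, CFC.abs,
    CFC.sqrt_eq_zero_iff _ (star_mul_self_nonneg A), star_eq_conjTranspose,
    conjTranspose_mul_self_eq_zero] at h

lemma trNorm_smul (c : ℂ) (A : Matrix (Fin d) (Fin d) ℂ) : trNorm (c • A) = ‖c‖ * trNorm A := by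
  rw [trNorm_eq_re_trace_abs, trNorm_eq_re_trace_abs, CFC.abs_smul, trace_smul]
  simp

@[simp]
lemma trNorm_zero : trNorm (0 : Matrix (Fin d) (Fin d) ℂ) = 0 := by
  simpa using trNorm_smul 0 (0 : Matrix (Fin d) (Fin d) ℂ)

lemma trNorm_neg (A : Matrix (Fin d) (Fin d) ℂ) : trNorm (-A) = trNorm A := by
  rw [trNorm_eq_re_trace_abs, trNorm_eq_re_trace_abs, CFC.abs_neg]

noncomputable def singularValue (A : Matrix (Fin d) (Fin d) ℂ) : Fin d → ℝ :=
  (posSemidef_abs A).1.eigenvalues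

noncomputable def singularVector (A : Matrix (Fin d) (Fin d) ℂ) :
    OrthonormalBasis (Fin d) ℂ (EuclideanSpace ℂ (Fin d)) :=
  (posSemidef_abs A).1.eigenvectorBasis

section SingularValues

variable (A : Matrix (Fin d) (Fin d) ℂ)

lemma singularValue_nonneg (j : Fin d) : 0 ≤ singularValue A j :=
  (posSemidef_abs A).eigenvalues_nonneg j

lemma trNorm_eq_sum_singularValue : trNorm A = ∑ j, singularValue A j := by
  rw [trNorm_eq_re_trace_abs, (posSemidef_abs A).1.trace_eq_sum_eigenvalues]
  simp [singularValue]

lemma toEuclideanLin_abs_singularVector (j : Fin d) :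
    (CFC.abs A).toEuclideanLin (singularVector A j)
      = (singularValue A j : ℂ) • singularVector A j :=
  WithLp.ofLp_injective 2 <| by
    rw [ofLp_toLpLin, WithLp.ofLp_smul, toLin'_apply, Complex.coe_smul]
    exact (posSemidef_abs A).1.mulVec_eigenvectorBasis j

lemma inner_toEuclideanLin_singularVector (j k : Fin d) :
    ⟪A.toEuclideanLin (singularVector A j), A.toEuclideanLin (singularVector A k)⟫_ℂ
      = if j = k then (singularValue A j : ℂ) ^ 2 else 0 := by
  rw [← LinearMap.adjoint_inner_right, ← toEuclideanLin_conjTranspose_eq_adjoint,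
    ← LinearMap.comp_apply, ← toLpLin_mul, ← star_eq_conjTranspose, ← CFC.abs_mul_abs,
    toLpLin_mul, LinearMap.comp_apply, toEuclideanLin_abs_singularVector, map_smul,
    toEuclideanLin_abs_singularVector, inner_smul_right, inner_smul_right,
    OrthonormalBasis.inner_eq_ite]
  split_ifs with h <;> simp [h, sq]

lemma norm_toEuclideanLin_singularVector (j : Fin d) :
    ‖A.toEuclideanLin (singularVector A j)‖ = singularValue A j := by
  refine (sq_eq_sq₀ (norm_nonneg _) (singularValue_nonneg A j)).mp ?_
  have h := inner_self_eq_norm_sq_to_K (𝕜 := ℂ) (A.toEuclideanLin (singularVector A j))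
  rw [inner_toEuclideanLin_singularVector, if_pos rfl] at h
  exact Complex.ofReal_injective (by simpa using h.symm)

lemma sum_re_inner_toEuclideanLin_le_trNorm {ι : Type*} [Fintype ι]
    {u v : ι → EuclideanSpace ℂ (Fin d)} (hu : Orthonormal ℂ u) (hv : Orthonormal ℂ v) :
    ∑ i, (⟪u i, A.toEuclideanLin (v i)⟫_ℂ).re ≤ trNorm A := by
  set e := singularVector A
  have hexpand : ∀ i, ⟪u i, A.toEuclideanLin (v i)⟫_ℂ
      = ∑ j, ⟪e j, v i⟫_ℂ * ⟪u i, A.toEuclideanLin (e j)⟫_ℂ := by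
    intro i
    conv_lhs => rw [← e.sum_repr' (v i)]
    simp only [map_sum, map_smul, inner_sum, inner_smul_right]
  calc ∑ i, (⟪u i, A.toEuclideanLin (v i)⟫_ℂ).re
      ≤ ∑ i, ∑ j, ‖⟪v i, e j⟫_ℂ‖ * ‖⟪u i, A.toEuclideanLin (e j)⟫_ℂ‖ :=
        Finset.sum_le_sum fun i _ => by
          rw [hexpand]
          refine (Complex.re_le_norm _).trans ((norm_sum_le _ _).trans ?_)
          simp only [norm_mul, norm_inner_symm, le_refl]
    _ = ∑ j, ∑ i, ‖⟪v i, e j⟫_ℂ‖ * ‖⟪u i, A.toEuclideanLin (e j)⟫_ℂ‖ := Finset.sum_comm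
    _ ≤ ∑ j, ‖e j‖ * ‖A.toEuclideanLin (e j)‖ :=
        Finset.sum_le_sum fun j _ => hu.sum_norm_inner_mul_norm_inner_le hv _ _
    _ = trNorm A := by
        simp [e, norm_toEuclideanLin_singularVector, trNorm_eq_sum_singularValue]

lemma exists_orthonormal_sum_re_inner_toEuclideanLin_eq_trNorm :
    ∃ u v : {j // singularValue A j ≠ 0} → EuclideanSpace ℂ (Fin d),
      Orthonormal ℂ u ∧ Orthonormal ℂ v ∧
        ∑ j, (⟪u j, A.toEuclideanLin (v j)⟫_ℂ).re = trNorm A := by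
  refine ⟨fun j => (singularValue A j : ℂ)⁻¹ • A.toEuclideanLin (singularVector A j),
    fun j => singularVector A j, ?_,
    (singularVector A).orthonormal.comp _ Subtype.val_injective, ?_⟩
  · rw [orthonormal_iff_ite]
    rintro ⟨j, hj⟩ ⟨k, hk⟩
    simp only [inner_smul_left, inner_smul_right, inner_toEuclideanLin_singularVector,
      Subtype.mk.injEq]
    split_ifs with hjk
    · subst hjk
      simp only [map_inv₀, Complex.conj_ofReal]
      field_simp
    · simp
  · have hterm : ∀ j : {j // singularValue A j ≠ 0},
        (⟪(singularValue A j : ℂ)⁻¹ • A.toEuclideanLin (singularVector A j),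
          A.toEuclideanLin (singularVector A j)⟫_ℂ).re = singularValue A j := by
      rintro ⟨j, hj⟩
      have hj' : (singularValue A j : ℂ) ≠ 0 := by exact_mod_cast hj
      rw [inner_smul_left, inner_toEuclideanLin_singularVector, if_pos rfl, map_inv₀,
        Complex.conj_ofReal, ← Complex.ofReal_pow, ← Complex.ofReal_inv, ← Complex.ofReal_mul,
        Complex.ofReal_re]
      field_simp
    rw [Finset.sum_congr rfl fun j _ => hterm j, trNorm_eq_sum_singularValue,
      ← Finset.sum_filter_ne_zero (f := singularValue A),
      Finset.sum_subtype (p := fun j => singularValue A j ≠ 0) _ (by simp)]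

end SingularValues

lemma trNorm_add_le (A B : Matrix (Fin d) (Fin d) ℂ) : trNorm (A + B) ≤ trNorm A + trNorm B := by
  obtain ⟨u, v, hu, hv, hsum⟩ := exists_orthonormal_sum_re_inner_toEuclideanLin_eq_trNorm (A + B)
  simp only [← hsum, map_add, LinearMap.add_apply, inner_add_right, Complex.add_re,
    Finset.sum_add_distrib]
  exact add_le_add (sum_re_inner_toEuclideanLin_le_trNorm A hu hv)
    (sum_re_inner_toEuclideanLin_le_trNorm B hu hv)

lemma trNorm_conjTranspose_le (A : Matrix (Fin d) (Fin d) ℂ) : trNorm Aᴴ ≤ trNorm A := by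
  obtain ⟨u, v, hu, hv, hsum⟩ := exists_orthonormal_sum_re_inner_toEuclideanLin_eq_trNorm Aᴴ
  rw [← hsum]
  convert sum_re_inner_toEuclideanLin_le_trNorm A hv hu using 2 with j
  rw [toEuclideanLin_conjTranspose_eq_adjoint, LinearMap.adjoint_inner_right, ← inner_conj_symm,
    Complex.conj_re]

lemma trNorm_conjTranspose (A : Matrix (Fin d) (Fin d) ℂ) : trNorm Aᴴ = trNorm A :=
  (trNorm_conjTranspose_le A).antisymm <| by
    simpa using trNorm_conjTranspose_le Aᴴ

lemma trNorm_sub_le (A B : Matrix (Fin d) (Fin d) ℂ) : trNorm (A - B) ≤ trNorm A + trNorm B := by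
  simpa [sub_eq_add_neg, trNorm_neg] using trNorm_add_le A (-B)

lemma trNorm_realPart_le (X : Matrix (Fin d) (Fin d) ℂ) :
    trNorm (ℜ X : Matrix (Fin d) (Fin d) ℂ) ≤ trNorm X := by
  rw [realPart_apply_coe, star_eq_conjTranspose, ← Complex.coe_smul, trNorm_smul]
  have := trNorm_add_le X Xᴴ
  rw [trNorm_conjTranspose] at this
  norm_num
  linarith

lemma trNorm_imaginaryPart_le (X : Matrix (Fin d) (Fin d) ℂ) :
    trNorm (ℑ X : Matrix (Fin d) (Fin d) ℂ) ≤ trNorm X := by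
  rw [imaginaryPart_apply_coe, star_eq_conjTranspose, ← Complex.coe_smul, trNorm_smul,
    trNorm_smul]
  have := trNorm_sub_le X Xᴴ
  rw [trNorm_conjTranspose] at this
  norm_num
  linarith

lemma trNorm_eq_re_trace_posPart_add_negPart {A : Matrix (Fin d) (Fin d) ℂ}
    (hA : A.IsHermitian) : trNorm A = (A⁺).trace.re + (A⁻).trace.re := by
  rw [trNorm_eq_re_trace_abs, ← CFC.posPart_add_negPart A hA.isSelfAdjoint, trace_add,
    Complex.add_re]

lemma norm_trace_le_trNorm {A : Matrix (Fin d) (Fin d) ℂ} (hA : A.IsHermitian) :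
    ‖A.trace‖ ≤ trNorm A := by
  rw [trNorm_eq_re_trace_posPart_add_negPart hA,
    Complex.re_eq_norm.mpr (CFC.posPart_nonneg A).posSemidef.trace_nonneg,
    Complex.re_eq_norm.mpr (CFC.negPart_nonneg A).posSemidef.trace_nonneg]
  conv_lhs => rw [← CFC.posPart_sub_negPart A hA.isSelfAdjoint, trace_sub]
  exact norm_sub_le _ _

section PositiveMap

variable {Φ : Matrix (Fin d) (Fin d) ℂ →ₗ[ℂ] Matrix (Fin d) (Fin d) ℂ}

lemma trNorm_apply_le_of_isHermitian (hpos : PosMap Φ) (htr : TrPres Φ)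
    {A : Matrix (Fin d) (Fin d) ℂ} (hA : A.IsHermitian) : trNorm (Φ A) ≤ trNorm A := by
  have hP := hpos _ (CFC.posPart_nonneg A).posSemidef
  have hN := hpos _ (CFC.negPart_nonneg A).posSemidef
  calc trNorm (Φ A) = trNorm (Φ A⁺ - Φ A⁻) := by
        rw [← map_sub, CFC.posPart_sub_negPart A hA.isSelfAdjoint]
    _ ≤ trNorm (Φ A⁺) + trNorm (Φ A⁻) := trNorm_sub_le _ _
    _ = trNorm A := by
        rw [trNorm_of_posSemidef hP, trNorm_of_posSemidef hN, htr, htr,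
          trNorm_eq_re_trace_posPart_add_negPart hA]

lemma kappaTr_nonneg (Φ : Matrix (Fin d) (Fin d) ℂ →ₗ[ℂ] Matrix (Fin d) (Fin d) ℂ) :
    0 ≤ kappaTr Φ :=
  Real.iSup_nonneg fun _ => div_nonneg (trNorm_nonneg _) (trNorm_nonneg _)

lemma trNorm_apply_le_kappaTr_mul (hpos : PosMap Φ) (htr : TrPres Φ)
    {Y : Matrix (Fin d) (Fin d) ℂ} (hY : Y.IsHermitian) (hY0 : Y.trace = 0) :
    trNorm (Φ Y) ≤ kappaTr Φ * trNorm Y := by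
  rcases eq_or_ne Y 0 with rfl | hY'
  · simp
  rw [← div_le_iff₀ (trNorm_pos hY'), kappaTr]
  refine le_ciSup (f := fun X : {X : Matrix (Fin d) (Fin d) ℂ //
      X.IsHermitian ∧ X.trace = 0 ∧ X ≠ 0} => trNorm (Φ X.1) / trNorm X.1)
    ⟨1, ?_⟩ ⟨Y, hY, hY0, hY'⟩
  rintro _ ⟨X, rfl⟩
  exact div_le_one_of_le₀ (trNorm_apply_le_of_isHermitian hpos htr X.2.1) (trNorm_nonneg _)

lemma sub_replaceChan_apply (σ X : Matrix (Fin d) (Fin d) ℂ) :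
    (Φ - replaceChan σ) X = Φ X - X.trace • σ :=
  rfl

lemma trNorm_apply_sub_trace_smul_le_of_isHermitian (hpos : PosMap Φ) (htr : TrPres Φ)
    {τ : Matrix (Fin d) (Fin d) ℂ} (hτ : Density τ) {A : Matrix (Fin d) (Fin d) ℂ}
    (hA : A.IsHermitian) :
    trNorm (Φ A - A.trace • Φ τ) ≤ 2 * kappaTr Φ * trNorm A := by
  set Y := A - A.trace • τ
  have htrace : IsSelfAdjoint A.trace := by rw [IsSelfAdjoint, ← trace_conjTranspose, hA.eq]
  have hY : Y.IsHermitian := hA.sub (hτ.1.1.smul htrace)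
  have hY0 : Y.trace = 0 := by simp [Y, hτ.2]
  have hYnorm : trNorm Y ≤ 2 * trNorm A := calc
    trNorm Y ≤ trNorm A + trNorm (A.trace • τ) := trNorm_sub_le _ _
    _ = trNorm A + ‖A.trace‖ := by rw [trNorm_smul, trNorm_of_posSemidef hτ.1, hτ.2]; simp
    _ ≤ 2 * trNorm A := by linarith [norm_trace_le_trNorm hA]
  calc trNorm (Φ A - A.trace • Φ τ) = trNorm (Φ Y) := by simp only [Y, map_sub, map_smul]
    _ ≤ kappaTr Φ * trNorm Y := trNorm_apply_le_kappaTr_mul hpos htr hY hY0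
    _ ≤ kappaTr Φ * (2 * trNorm A) := mul_le_mul_of_nonneg_left hYnorm (kappaTr_nonneg Φ)
    _ = 2 * kappaTr Φ * trNorm A := by ring

lemma trNorm_sub_replaceChan_apply_le (hpos : PosMap Φ) (htr : TrPres Φ)
    {τ : Matrix (Fin d) (Fin d) ℂ} (hτ : Density τ) (X : Matrix (Fin d) (Fin d) ℂ) :
    trNorm ((Φ - replaceChan (Φ τ)) X) ≤ 4 * kappaTr Φ * trNorm X := by
  set A : Matrix (Fin d) (Fin d) ℂ := ↑(ℜ X)
  set B : Matrix (Fin d) (Fin d) ℂ := ↑(ℑ X)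
  have hsplit : (Φ - replaceChan (Φ τ)) X
      = (Φ A - A.trace • Φ τ) + Complex.I • (Φ B - B.trace • Φ τ) := by
    rw [sub_replaceChan_apply, ← realPart_add_I_smul_imaginaryPart X]
    simp only [map_add, map_smul, trace_add, trace_smul, smul_eq_mul, add_smul, mul_smul, smul_sub]
    abel
  have hκ := kappaTr_nonneg Φ
  calc trNorm ((Φ - replaceChan (Φ τ)) X)
      ≤ trNorm (Φ A - A.trace • Φ τ) + trNorm (Φ B - B.trace • Φ τ) := by
        rw [hsplit]
        refine (trNorm_add_le _ _).trans_eq ?_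
        rw [trNorm_smul, Complex.norm_I, one_mul]
    _ ≤ 2 * kappaTr Φ * trNorm A + 2 * kappaTr Φ * trNorm B :=
        add_le_add (trNorm_apply_sub_trace_smul_le_of_isHermitian hpos htr hτ (ℜ X).2)
          (trNorm_apply_sub_trace_smul_le_of_isHermitian hpos htr hτ (ℑ X).2)
    _ ≤ 2 * kappaTr Φ * trNorm X + 2 * kappaTr Φ * trNorm X := by
        gcongr
        exacts [trNorm_realPart_le X, trNorm_imaginaryPart_le X]
    _ = 4 * kappaTr Φ * trNorm X := by ring

end PositiveMap

section OperatorNorm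

variable {L : Matrix (Fin d) (Fin d) ℂ →ₗ[ℂ] Matrix (Fin d) (Fin d) ℂ} {C : ℝ}

lemma opNorm1_nonneg (L : Matrix (Fin d) (Fin d) ℂ →ₗ[ℂ] Matrix (Fin d) (Fin d) ℂ) :
    0 ≤ opNorm1 L :=
  Real.iSup_nonneg fun _ => div_nonneg (trNorm_nonneg _) (trNorm_nonneg _)

lemma opNorm1_le (hC : 0 ≤ C) (h : ∀ X, trNorm (L X) ≤ C * trNorm X) : opNorm1 L ≤ C :=
  Real.iSup_le (fun X => (div_le_iff₀ (trNorm_pos X.2)).mpr (h X.1)) hC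

lemma trNorm_apply_div_le_opNorm1 (h : ∀ X, trNorm (L X) ≤ C * trNorm X)
    {X : Matrix (Fin d) (Fin d) ℂ} (hX : X ≠ 0) : trNorm (L X) / trNorm X ≤ opNorm1 L := by
  rw [opNorm1]
  refine le_ciSup (f := fun X : {X : Matrix (Fin d) (Fin d) ℂ // X ≠ 0} =>
    trNorm (L X.1) / trNorm X.1) ⟨C, ?_⟩ ⟨X, hX⟩
  rintro _ ⟨Y, rfl⟩
  exact (div_le_iff₀ (trNorm_pos Y.2)).mpr (h Y.1)

end OperatorNorm

lemma kappaTr_le_opNorm1_sub_replaceChan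
    {Φ : Matrix (Fin d) (Fin d) ℂ →ₗ[ℂ] Matrix (Fin d) (Fin d) ℂ}
    {σ : Matrix (Fin d) (Fin d) ℂ} {C : ℝ}
    (h : ∀ X, trNorm ((Φ - replaceChan σ) X) ≤ C * trNorm X) :
    kappaTr Φ ≤ opNorm1 (Φ - replaceChan σ) := by
  refine Real.iSup_le (fun X => ?_) (opNorm1_nonneg _)
  have hX : (Φ - replaceChan σ) X.1 = Φ X.1 := by
    rw [sub_replaceChan_apply, X.2.2.1, zero_smul, sub_zero]
  simpa [hX] using trNorm_apply_div_le_opNorm1 h X.2.2.2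

end TD

theorem stmt7_general {d : ℕ}
    (Φ : Matrix (Fin d) (Fin d) ℂ →ₗ[ℂ] Matrix (Fin d) (Fin d) ℂ)
    (hpos : TD.PosMap Φ) (htr : TD.TrPres Φ)
    (τ : Matrix (Fin d) (Fin d) ℂ) (hτ : TD.Density τ) :
    TD.kappaTr Φ ≤ TD.opNorm1 (Φ - TD.replaceChan (Φ τ)) ∧
    TD.opNorm1 (Φ - TD.replaceChan (Φ τ)) ≤ 4 * TD.kappaTr Φ := by
  have hbound := TD.trNorm_sub_replaceChan_apply_le hpos htr hτ
  exact ⟨TD.kappaTr_le_opNorm1_sub_replaceChan hbound,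
    TD.opNorm1_le (by linarith [TD.kappaTr_nonneg Φ]) hbound⟩

theorem stmt7 {d : ℕ} (hd : 2 ≤ d)
    (Φ : Matrix (Fin d) (Fin d) ℂ →ₗ[ℂ] Matrix (Fin d) (Fin d) ℂ)
    (hpos : TD.PosMap Φ) (htr : TD.TrPres Φ)
    (τ : Matrix (Fin d) (Fin d) ℂ) (hτ : TD.Density τ) :
    TD.kappaTr Φ ≤ TD.opNorm1 (Φ - TD.replaceChan (Φ τ)) ∧
    TD.opNorm1 (Φ - TD.replaceChan (Φ τ)) ≤ 4 * TD.kappaTr Φ :=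
  stmt7_general Φ hpos htr τ hτ
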